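/- Let f(x₁, x₂) be jointly L-smooth in (x₁, x₂) and convex in x₁ for fixed x₂ and convex in x₂ for fixed x₁. Then for all x₁, x₂, x̄₁, x̄₂: f(x₁, x₂) ≤ f(x₁, x̄₂) + f(x̄₁, x₂) − f(x̄₁, x̄₂) + (L/2)‖x₁ − x̄₁‖² + (L/2)‖x₂ − x̄₂‖². -/

import Mathlib

/-!
For fixed `x₂, x̄₂`, the gradient of `u ↦ f u x₂ - f u x̄₂` is `f₁' u x₂ - f₁' u x̄₂`, whose norm the
Lipschitz bound caps at `L ‖x₂ - x̄₂‖`. The mean value inequality then bounds the mixed second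
difference `f x₁ x₂ - f x₁ x̄₂ - f x̄₁ x₂ + f x̄₁ x̄₂` by `L ‖x₁ - x̄₁‖ ‖x₂ - x̄₂‖`, and AM-GM splits
this product into the two quadratic terms.
-/

open InnerProductSpace

theorem mixed_difference_le {E F : Type*} [NormedAddCommGroup E] [InnerProductSpace ℝ E]
    [CompleteSpace E] [SeminormedAddCommGroup F] {f : E → F → ℝ} {f₁' : E → F → E} {K : ℝ}
    (hgrad₁ : ∀ x y, HasGradientAt (fun u => f u y) (f₁' x y) x)
    (hLip : ∀ x y y', ‖f₁' x y - f₁' x y'‖ ≤ K * ‖y - y'‖) (x xb : E) (y yb : F) :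
    f x y - f x yb - (f xb y - f xb yb) ≤ K * ‖x - xb‖ * ‖y - yb‖ := by
  have hderiv : ∀ u ∈ Set.univ, HasFDerivWithinAt (fun u => f u y - f u yb)
      (toDual ℝ E (f₁' u y - f₁' u yb)) Set.univ u := fun u _ => by
    rw [map_sub]
    exact ((hgrad₁ u y).hasFDerivAt.sub (hgrad₁ u yb).hasFDerivAt).hasFDerivWithinAt
  have hbound : ∀ u ∈ Set.univ, ‖toDual ℝ E (f₁' u y - f₁' u yb)‖ ≤ K * ‖y - yb‖ :=
    fun u _ => ((toDual ℝ E).norm_map _).trans_le (hLip u y yb)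
  have hmvt := convex_univ.norm_image_sub_le_of_norm_hasFDerivWithin_le hderiv hbound
    (Set.mem_univ xb) (Set.mem_univ x)
  rw [Real.norm_eq_abs] at hmvt
  linarith [le_abs_self (f x y - f x yb - (f xb y - f xb yb))]

theorem block_convex_surrogate_general {n m : ℕ}
    (f : EuclideanSpace ℝ (Fin n) → EuclideanSpace ℝ (Fin m) → ℝ)
    (f₁' : EuclideanSpace ℝ (Fin n) → EuclideanSpace ℝ (Fin m) → EuclideanSpace ℝ (Fin n))
    (f₂' : EuclideanSpace ℝ (Fin n) → EuclideanSpace ℝ (Fin m) → EuclideanSpace ℝ (Fin m))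
    (hgrad₁ : ∀ x₁ x₂, HasGradientAt (fun u => f u x₂) (f₁' x₁ x₂) x₁)
    (L : ℝ) (hL : 0 ≤ L)
    (hLip : ∀ x₁ x₂ x₁' x₂', ‖f₁' x₁ x₂ - f₁' x₁' x₂'‖ ^ 2 + ‖f₂' x₁ x₂ - f₂' x₁' x₂'‖ ^ 2
      ≤ L ^ 2 * (‖x₁ - x₁'‖ ^ 2 + ‖x₂ - x₂'‖ ^ 2)) :
    ∀ x₁ x₂ xb₁ xb₂,
      f x₁ x₂ ≤ f x₁ xb₂ + f xb₁ x₂ - f xb₁ xb₂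
        + L / 2 * ‖x₁ - xb₁‖ ^ 2 + L / 2 * ‖x₂ - xb₂‖ ^ 2 := by
  intro x₁ x₂ xb₁ xb₂
  have hLip₁ : ∀ u y y', ‖f₁' u y - f₁' u y'‖ ≤ L * ‖y - y'‖ := by
    intro u y y'
    have h := hLip u y u y'
    rw [sub_self, norm_zero, zero_pow two_ne_zero, zero_add, ← mul_pow] at h
    exact (pow_le_pow_iff_left₀ (norm_nonneg _) (mul_nonneg hL (norm_nonneg _)) two_ne_zero).1
      ((le_add_of_nonneg_right (sq_nonneg _)).trans h)
  have hmixed := mixed_difference_le hgrad₁ hLip₁ x₁ xb₁ x₂ xb₂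
  have hamgm := mul_le_mul_of_nonneg_left (two_mul_le_add_sq ‖x₁ - xb₁‖ ‖x₂ - xb₂‖) hL
  linarith

theorem block_convex_surrogate {n m : ℕ}
    (f : EuclideanSpace ℝ (Fin n) → EuclideanSpace ℝ (Fin m) → ℝ)
    (f₁' : EuclideanSpace ℝ (Fin n) → EuclideanSpace ℝ (Fin m) → EuclideanSpace ℝ (Fin n))
    (f₂' : EuclideanSpace ℝ (Fin n) → EuclideanSpace ℝ (Fin m) → EuclideanSpace ℝ (Fin m))
    (hgrad₁ : ∀ x₁ x₂, HasGradientAt (fun u => f u x₂) (f₁' x₁ x₂) x₁)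
    (hgrad₂ : ∀ x₁ x₂, HasGradientAt (fun v => f x₁ v) (f₂' x₁ x₂) x₂)
    (L : ℝ) (hL : 0 ≤ L)
    (hLip : ∀ x₁ x₂ x₁' x₂', ‖f₁' x₁ x₂ - f₁' x₁' x₂'‖ ^ 2 + ‖f₂' x₁ x₂ - f₂' x₁' x₂'‖ ^ 2
      ≤ L ^ 2 * (‖x₁ - x₁'‖ ^ 2 + ‖x₂ - x₂'‖ ^ 2))
    (hconv₁ : ∀ x₂, ConvexOn ℝ Set.univ (fun x₁ => f x₁ x₂))
    (hconv₂ : ∀ x₁, ConvexOn ℝ Set.univ (fun x₂ => f x₁ x₂)) :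
    ∀ x₁ x₂ xb₁ xb₂,
      f x₁ x₂ ≤ f x₁ xb₂ + f xb₁ x₂ - f xb₁ xb₂
        + L / 2 * ‖x₁ - xb₁‖ ^ 2 + L / 2 * ‖x₂ - xb₂‖ ^ 2 :=
  block_convex_surrogate_general f f₁' f₂' hgrad₁ L hL hLip
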